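/- Let Γ = (C, X, H, I, η, E) be a Galois structure such that the reflector I preserves all pullbacks of a morphism g in E along a morphism f in E with g a split epimorphism. Then every covering which is a split epimorphism is a trivial covering. -/

import Mathlib

open CategoryTheory CategoryTheory.Limits

universe v u v' u'

namespace GaloisPaper

variable {C : Type u} [Category.{v} C]

/-- The class `E¹` of "double extensions" relative to a class `F` of morphisms:
a commutative square (i.e. a morphism `σ : a ⟶ b` of the arrow category) with all
four arrows in `F`, such that the comparison morphism to the pullback lies in `F`. -/
def InE1 (F : MorphismProperty C) : MorphismProperty (Arrow C) := fun a b σ =>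
  F a.hom ∧ F b.hom ∧ F σ.left ∧ F σ.right ∧
    ∃ (P : C) (p₁ : P ⟶ a.right) (p₂ : P ⟶ b.left) (l : a.left ⟶ P),
      IsPullback p₁ p₂ σ.right b.hom ∧ l ≫ p₁ = a.hom ∧ l ≫ p₂ = σ.left ∧ F l

/-- (E1): `F` contains all isomorphisms (between objects satisfying `O`). -/
def CondE1 (O : C → Prop) (F : MorphismProperty C) : Prop :=
  ∀ ⦃a b : C⦄ (σ : a ⟶ b), O a → O b → IsIso σ → F σ

/-- (E2): `F` is pullback-stable: pullbacks of morphisms of `F` along arbitrary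
morphisms (between objects satisfying `O`) exist and lie in `F`. -/
def CondE2 (O : C → Prop) (F : MorphismProperty C) : Prop :=
  ∀ ⦃a b : C⦄ (σ : a ⟶ b), F σ → ∀ ⦃c : C⦄ (g : c ⟶ b), O c →
    (∃ (d : C) (q₁ : d ⟶ a) (q₂ : d ⟶ c), O d ∧ IsPullback q₁ q₂ σ g ∧ F q₂) ∧
    (∀ ⦃d : C⦄ (q₁ : d ⟶ a) (q₂ : d ⟶ c), O d → IsPullback q₁ q₂ σ g → F q₂)

/-- (E3): `F` is closed under composition. -/
def CondE3 (F : MorphismProperty C) : Prop :=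
  ∀ ⦃a b c : C⦄ (σ : a ⟶ b) (τ : b ⟶ c), F σ → F τ → F (σ ≫ τ)

/-- (E4): if `σ ≫ τ ∈ F` then `τ ∈ F`. -/
def CondE4 (O : C → Prop) (F : MorphismProperty C) : Prop :=
  ∀ ⦃a b c : C⦄ (σ : a ⟶ b) (τ : b ⟶ c), O a → O b → O c → F (σ ≫ τ) → F τ

/-- (E5): every split epimorphism of `Ext(C)` (i.e. every morphism of the arrow
category between `F`-arrows admitting a section) lies in `F¹`. -/
def CondE5 (F : MorphismProperty C) : Prop :=
  ∀ ⦃a b : Arrow C⦄ (σ : a ⟶ b) (τ : b ⟶ a), τ ≫ σ = 𝟙 b → F a.hom → F b.hom → InE1 F σ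

/-- `(C ↓ B)`: the full subcategory of `Over B` on morphisms in `F`. -/
def EOver (F : MorphismProperty C) (B : C) :=
  ObjectProperty.FullSubcategory (fun f : Over B => F f.hom)

instance (F : MorphismProperty C) (B : C) : Category (EOver F B) :=
  ObjectProperty.FullSubcategory.category _

/-- `Σ_p`: composition with `p`, as a functor `(C ↓ A) ⥤ (C ↓ B)`. -/
def eMap (F : MorphismProperty C) {A B : C} (p : A ⟶ B)
    (hcomp : ∀ ⦃Z : C⦄ (f : Z ⟶ A), F f → F (f ≫ p)) : EOver F A ⥤ EOver F B :=
  ObjectProperty.lift _ (ObjectProperty.ι _ ⋙ Over.map p)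
    (fun f => hcomp f.obj.hom f.property)

/-- `p` is a monadic extension (effective `F`-descent morphism): `p ∈ F` and the
pullback functor `p* : (C ↓ B) ⥤ (C ↓ A)` (i.e. the right adjoint of `Σ_p`) is monadic. -/
def IsMonadicExt (F : MorphismProperty C) {A B : C} (p : A ⟶ B) : Prop :=
  F p ∧ ∃ (hcomp : ∀ ⦃Z : C⦄ (f : Z ⟶ A), F f → F (f ≫ p))
    (G : EOver F B ⥤ EOver F A) (_ : eMap F p hcomp ⊣ G),
    Nonempty (MonadicRightAdjoint G)

/-- `u : e ⟶ r` exhibits `r` as a reflection of `e` into the full subcategory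
determined by `P`. -/
def IsReflectionInto {D : Type u'} [Category.{v'} D] (P : D → Prop) {e r : D}
    (u : e ⟶ r) : Prop :=
  P r ∧ ∀ ⦃a : D⦄, P a → ∀ k : e ⟶ a, ∃! m : r ⟶ a, u ≫ m = k

/-- A Galois structure `(C, X, H, I, η, E)` as in Janelidze–Kelly: a full replete
reflective subcategory together with a class `E` satisfying (E1)–(E3) and (G). -/
structure GaloisStructure (C : Type u) [Category.{v} C] (X : Type u') [Category.{v'} X] where
  H : X ⥤ C
  I : C ⥤ X
  adj : I ⊣ H
  hFull : H.Full
  hFaithful : H.Faithful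
  E : MorphismProperty C
  hE1 : CondE1 (fun _ => True) E
  hE2 : CondE2 (fun _ => True) E
  hE3 : CondE3 E
  hG : ∀ ⦃A B : C⦄ (f : A ⟶ B), E f → E (H.map (I.map f))

namespace GaloisStructure

variable {X : Type u'} [Category.{v'} X] (Γ : GaloisStructure C X)

/-- The component `η_A : A ⟶ HI(A)` of the reflection unit. -/
def unitApp (A : C) : A ⟶ Γ.H.obj (Γ.I.obj A) := Γ.adj.unit.app A

/-- A trivial covering: `f ∈ E` whose `η`-naturality square is a pullback. -/
def TrivCov {A B : C} (f : A ⟶ B) : Prop :=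
  Γ.E f ∧ IsPullback (Γ.unitApp A) f (Γ.H.map (Γ.I.map f)) (Γ.unitApp B)

/-- `f` is split by `p`: the pullback `p*(f)` of `f` along `p` is a trivial covering. -/
def IsSplitBy {A B E' : C} (f : A ⟶ B) (p : E' ⟶ B) : Prop :=
  ∀ ⦃P : C⦄ (p₁ : P ⟶ A) (p₂ : P ⟶ E'), IsPullback p₁ p₂ f p → Γ.TrivCov p₂

/-- A covering (central extension): a morphism of `E` split by some monadic extension. -/
def Covering {A B : C} (f : A ⟶ B) : Prop :=
  Γ.E f ∧ ∃ (E' : C) (p : E' ⟶ B), IsMonadicExt Γ.E p ∧ Γ.IsSplitBy f p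

/-- A normal extension: a monadic extension split by itself. -/
def NormalExt {A B : C} (p : A ⟶ B) : Prop :=
  IsMonadicExt Γ.E p ∧ Γ.IsSplitBy p p

/-- (M): every morphism of `E` is a monadic extension. -/
def CondM : Prop := ∀ ⦃A B : C⦄ (p : A ⟶ B), Γ.E p → IsMonadicExt Γ.E p

/-- Admissibility of the Galois structure: the right adjoints
`H^B : (X ↓ I(B)) ⥤ (C ↓ B)` are fully faithful.  Equivalently (and this is how we
state it), for every `φ : x ⟶ I(B)` with `H(φ) ∈ E` and every pullback of `H(φ)`
along `η_B`, the corresponding component of the counit of `I^B ⊣ H^B`, i.e. the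
adjoint transpose `I(A) ⟶ x` of `t : A ⟶ H(x)`, is an isomorphism. -/
def Admissible : Prop :=
  ∀ ⦃B : C⦄ ⦃x : X⦄ (φ : x ⟶ Γ.I.obj B), Γ.E (Γ.H.map φ) →
    ∀ ⦃A : C⦄ (t : A ⟶ Γ.H.obj x) (f : A ⟶ B),
      IsPullback t f (Γ.H.map φ) (Γ.unitApp B) →
      IsIso ((Γ.adj.homEquiv A x).symm t)

/-- The `η`-naturality square at `f`, as a morphism of the arrow category. -/
def unitSq {A B : C} (f : A ⟶ B) : Arrow.mk f ⟶ Arrow.mk (Γ.H.map (Γ.I.map f)) :=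
  Arrow.homMk (u := Γ.unitApp A) (v := Γ.unitApp B)
    (by simp [unitApp])

/-- (B): `X` is a strongly `E`-Birkhoff subcategory of `C`: every `η`-naturality
square at a morphism of `E` lies in `E¹`. -/
def StronglyBirkhoff : Prop :=
  ∀ ⦃A B : C⦄ (f : A ⟶ B), Γ.E f → InE1 Γ.E (Γ.unitSq f)

/-- `I` preserves pullbacks of morphisms of `E` along split epimorphisms of `E`. -/
def PreservesSplitPullbacks : Prop :=
  ∀ ⦃D' A B C' : C⦄ (t : D' ⟶ A) (h : D' ⟶ C') (f : A ⟶ B) (g : C' ⟶ B),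
    IsPullback t h f g → Γ.E f → Γ.E g → IsSplitEpi g →
    IsPullback (Γ.I.map t) (Γ.I.map h) (Γ.I.map f) (Γ.I.map g)

end GaloisStructure

/-- The class of regular epimorphisms. -/
def regEpi (C : Type u) [Category.{v} C] : MorphismProperty C :=
  fun _ _ f => Nonempty (RegularEpi f)

/-- A pair of parallel morphisms is jointly monic. -/
def JointlyMono {R A : C} (d₀ d₁ : R ⟶ A) : Prop :=
  ∀ ⦃T : C⦄ (x y : T ⟶ R), x ≫ d₀ = y ≫ d₀ → x ≫ d₁ = y ≫ d₁ → x = y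

/-- An internal reflexive relation (given by its jointly monic pair of projections). -/
def IsReflexiveRel {R A : C} (d₀ d₁ : R ⟶ A) : Prop :=
  JointlyMono d₀ d₁ ∧ ∃ r : A ⟶ R, r ≫ d₀ = 𝟙 A ∧ r ≫ d₁ = 𝟙 A

/-- An internal equivalence relation. -/
def IsEquivRel {R A : C} (d₀ d₁ : R ⟶ A) : Prop :=
  IsReflexiveRel d₀ d₁ ∧ (∃ s : R ⟶ R, s ≫ d₀ = d₁ ∧ s ≫ d₁ = d₀) ∧
    ∀ ⦃T : C⦄ (x y : T ⟶ R), x ≫ d₁ = y ≫ d₀ →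
      ∃ t : T ⟶ R, t ≫ d₀ = x ≫ d₀ ∧ t ≫ d₁ = y ≫ d₁

/-- A Mal'tsev category: every internal reflexive relation is an equivalence relation. -/
def IsMaltsevCat (C : Type u) [Category.{v} C] : Prop :=
  ∀ ⦃A R : C⦄ (d₀ d₁ : R ⟶ A), IsReflexiveRel d₀ d₁ → IsEquivRel d₀ d₁

/-- A regular category: finite limits (assumed separately), regular epi–mono
factorisations, and pullback-stability of regular epimorphisms. -/
structure IsRegularCategory (C : Type u) [Category.{v} C] : Prop where
  factor : ∀ ⦃A B : C⦄ (f : A ⟶ B), ∃ (I' : C) (e : A ⟶ I') (m : I' ⟶ B),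
    f = e ≫ m ∧ Nonempty (RegularEpi e) ∧ Mono m
  stable : ∀ ⦃P' X' Y' Z' : C⦄ (p₁ : P' ⟶ X') (p₂ : P' ⟶ Y') (f : X' ⟶ Z') (g : Y' ⟶ Z'),
    IsPullback p₁ p₂ f g → Nonempty (RegularEpi f) → Nonempty (RegularEpi p₂)

/-- A Barr-exact category: regular, and every internal equivalence relation is
effective (i.e. a kernel pair). -/
def IsBarrExact (C : Type u) [Category.{v} C] : Prop :=
  IsRegularCategory C ∧ ∀ ⦃A R : C⦄ (d₀ d₁ : R ⟶ A), IsEquivRel d₀ d₁ →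
    ∃ (Q : C) (q : A ⟶ Q), IsPullback d₀ d₁ q q

/-- A Birkhoff subcategory: a full reflective subcategory closed under subobjects
and regular quotient objects. -/
structure IsBirkhoff {X : Type u'} [Category.{v'} X] (H : X ⥤ C) (I : C ⥤ X)
    (adj : I ⊣ H) : Prop where
  full : H.Full
  faithful : H.Faithful
  closedSub : ∀ (x : X) (A : C) (m : A ⟶ H.obj x), Mono m → ∃ y : X, Nonempty (A ≅ H.obj y)
  closedQuot : ∀ (x : X) (A : C) (e : H.obj x ⟶ A), Nonempty (RegularEpi e) →
    ∃ y : X, Nonempty (A ≅ H.obj y)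

/-- The category `Ext(C)` of `F`-morphisms. -/
def ExtCat (F : MorphismProperty C) := ObjectProperty.FullSubcategory (fun a : Arrow C => F a.hom)

instance (F : MorphismProperty C) : Category (ExtCat F) := ObjectProperty.FullSubcategory.category _

/-- The restriction of `F¹` to the category `Ext(C)`. -/
def ExtE1 (F : MorphismProperty C) : MorphismProperty (ExtCat F) :=
  fun _ _ σ => InE1 F ((ObjectProperty.ι _).map σ)


/-! Let `p` be a monadic extension splitting `f`, with `P = p*(A)`. As `f` is a split
epimorphism, `I` preserves the pullback `P`, so pasting the trivial-covering square of `p*(f)`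
with `HI` of that pullback shows that `P` is also the pullback of `Q = B ×_{HI(B)} HI(A)` along
`p`. Hence the comparison `A ⟶ Q` becomes invertible after pulling back along `p`, and since the
monadic functor `p*` reflects isomorphisms it is itself invertible: `f` is a trivial covering. -/

theorem _root_.CategoryTheory.Adjunction.isIso_map_of_bijective_comp {D : Type*} [Category D]
    {L : C ⥤ D} {G : D ⥤ C} (adj : L ⊣ G) {a b : D} (u : a ⟶ b)
    (hu : ∀ Y : C, Function.Bijective fun k : L.obj Y ⟶ a => k ≫ u) : IsIso (G.map u) := by
  refine isIso_of_yoneda_map_bijective _ fun Y => ?_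
  have hconj : (fun x : Y ⟶ G.obj a => x ≫ G.map u) =
      adj.homEquiv Y b ∘ (fun k => k ≫ u) ∘ (adj.homEquiv Y a).symm := by
    funext x
    rw [Function.comp_apply, Function.comp_apply, Adjunction.homEquiv_naturality_right,
      Equiv.apply_symm_apply]
  rw [hconj]
  exact (adj.homEquiv Y b).bijective.comp ((hu Y).comp (adj.homEquiv Y a).symm.bijective)

theorem _root_.CategoryTheory.MonadicRightAdjoint.reflectsIsomorphisms {D : Type*} [Category D]
    (G : D ⥤ C) [MonadicRightAdjoint G] : G.ReflectsIsomorphisms :=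
  reflectsIsomorphisms_of_iso (Monad.comparisonForget (monadicAdjunction G))

section Descent

variable {A B E₀ P Q Y : C} {f : A ⟶ B} {p : E₀ ⟶ B} {p₁ : P ⟶ A} {p₂ : P ⟶ E₀}
  {q : Q ⟶ B} {w : A ⟶ Q}

theorem hom_ext_of_isPullback_comp (h₁ : IsPullback p₁ p₂ f p)
    (h₂ : IsPullback (p₁ ≫ w) p₂ q p) {y : Y ⟶ E₀} {k k' : Y ⟶ A}
    (hk : k ≫ f = y ≫ p) (hk' : k' ≫ f = y ≫ p) (h : k ≫ w = k' ≫ w) : k = k' := by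
  rw [← h₁.lift_fst k y hk, ← h₁.lift_fst k' y hk']
  congr 1
  apply h₂.hom_ext
  · simpa [← Category.assoc] using h
  · simp

theorem exists_lift_of_isPullback_comp (h₁ : CommSq p₁ p₂ f p)
    (h₂ : IsPullback (p₁ ≫ w) p₂ q p) {y : Y ⟶ E₀} (g : Y ⟶ Q)
    (hg : g ≫ q = y ≫ p) :
    ∃ k : Y ⟶ A, k ≫ f = y ≫ p ∧ k ≫ w = g :=
  ⟨h₂.lift g y hg ≫ p₁, by simp [h₁.w], by simp⟩

/-- `h₁` and `h₂` say that `p*(w)` is invertible. The right adjoint `G` of `Σ_p` is only known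
up to isomorphism, so `G(w)` is tested through `Σ_p ⊣ G`: maps `Σ_p Y ⟶ A` over `B` correspond
to maps `Y ⟶ P` over `E₀`, hence to maps `Σ_p Y ⟶ Q`. -/
theorem isIso_of_isPullback_comp {F : MorphismProperty C} (hp : IsMonadicExt F p) (hf : F f)
    (hq : F q) (hw : w ≫ q = f) (h₁ : IsPullback p₁ p₂ f p)
    (h₂ : IsPullback (p₁ ≫ w) p₂ q p) : IsIso w := by
  obtain ⟨-, _, G, adj, ⟨_⟩⟩ := hp
  let wb : (⟨Over.mk f, hf⟩ : EOver F B) ⟶ ⟨Over.mk q, hq⟩ :=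
    ObjectProperty.homMk (Over.homMk w hw)
  have hGw : IsIso (G.map wb) := by
    refine adj.isIso_map_of_bijective_comp wb fun Y => ⟨fun k k' h => ?_, fun g => ?_⟩
    · apply ObjectProperty.hom_ext
      apply Over.OverMorphism.ext
      exact hom_ext_of_isPullback_comp h₁ h₂ (Over.w k.hom) (Over.w k'.hom)
        (congrArg (fun φ => φ.hom.left) h)
    · obtain ⟨k, hk, hkw⟩ :=
        exists_lift_of_isPullback_comp h₁.toCommSq h₂ g.hom.left (Over.w g.hom)
      exact ⟨ObjectProperty.homMk (Over.homMk k hk), by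
        apply ObjectProperty.hom_ext
        apply Over.OverMorphism.ext
        exact hkw⟩
  have : IsIso wb := (MonadicRightAdjoint.reflectsIsomorphisms G).reflects wb
  exact (inferInstance : IsIso ((ObjectProperty.ι _ ⋙ Over.forget B).map wb))

end Descent

namespace GaloisStructure

variable {X : Type u'} [Category.{v'} X] (Γ : GaloisStructure C X)

theorem unitApp_naturality {A B : C} (f : A ⟶ B) :
    Γ.unitApp A ≫ Γ.H.map (Γ.I.map f) = f ≫ Γ.unitApp B :=
  (Γ.adj.unit.naturality f).symm

theorem isPullback_comp_comparison (hpres : Γ.PreservesSplitPullbacks)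
    {A B E₀ P Q : C} {f : A ⟶ B} {p : E₀ ⟶ B} {p₁ : P ⟶ A} {p₂ : P ⟶ E₀}
    {q₁ : Q ⟶ Γ.H.obj (Γ.I.obj A)} {q₂ : Q ⟶ B} {w : A ⟶ Q}
    (hf : Γ.E f) (hsplit : IsSplitEpi f) (hp : Γ.E p) (h₁ : IsPullback p₁ p₂ f p)
    (hp₂ : Γ.TrivCov p₂) (hQ : IsPullback q₁ q₂ (Γ.H.map (Γ.I.map f)) (Γ.unitApp B))
    (hw₁ : w ≫ q₁ = Γ.unitApp A) (hw₂ : w ≫ q₂ = f) :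
    IsPullback (p₁ ≫ w) p₂ q₂ p := by
  have hHI : IsPullback (Γ.H.map (Γ.I.map p₁)) (Γ.H.map (Γ.I.map p₂))
      (Γ.H.map (Γ.I.map f)) (Γ.H.map (Γ.I.map p)) :=
    have := Γ.adj.rightAdjoint_preservesLimits
    (hpres p₂ p₁ p f h₁.flip hp hf hsplit).flip.map Γ.H
  have hpasted := hp₂.2.paste_horiz hHI
  rw [unitApp_naturality, unitApp_naturality] at hpasted
  refine IsPullback.of_right ?_ (by rw [Category.assoc, hw₂, h₁.w]) hQ
  rw [Category.assoc, hw₁]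
  exact hpasted

theorem trivCov_of_isIso_comparison {A B Q : C} {f : A ⟶ B}
    {q₁ : Q ⟶ Γ.H.obj (Γ.I.obj A)} {q₂ : Q ⟶ B} {w : A ⟶ Q} [IsIso w]
    (hf : Γ.E f) (hQ : IsPullback q₁ q₂ (Γ.H.map (Γ.I.map f)) (Γ.unitApp B))
    (hw₁ : w ≫ q₁ = Γ.unitApp A) (hw₂ : w ≫ q₂ = f) : Γ.TrivCov f := by
  refine ⟨hf, ?_⟩
  have hw : IsPullback w f q₂ (𝟙 B) :=
    IsPullback.of_horiz_isIso ⟨by rw [hw₂, Category.comp_id]⟩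
  simpa only [hw₁, Category.id_comp] using hw.paste_horiz hQ

end GaloisStructure

/-- If the reflector `I` preserves pullbacks of morphisms of `E` along
split epimorphisms of `E`, then every covering which is a split epimorphism is a
trivial covering. -/
theorem statement_4 {C : Type u} [Category.{v} C] {X : Type u'} [Category.{v'} X]
    (Γ : GaloisStructure C X) (hpres : Γ.PreservesSplitPullbacks)
    {A B : C} (f : A ⟶ B) (hf : Γ.Covering f) (hsplit : IsSplitEpi f) :
    Γ.TrivCov f := by
  obtain ⟨hEf, E₀, p, hp, hsplitBy⟩ := hf
  obtain ⟨⟨P, p₁, p₂, -, h₁, -⟩, -⟩ := Γ.hE2 f hEf p trivial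
  obtain ⟨⟨Q, q₁, q₂, -, hQ, hEq₂⟩, -⟩ :=
    Γ.hE2 (Γ.H.map (Γ.I.map f)) (Γ.hG f hEf) (Γ.unitApp B) trivial
  let w : A ⟶ Q := hQ.lift (Γ.unitApp A) f (Γ.unitApp_naturality f)
  have hw₁ : w ≫ q₁ = Γ.unitApp A := hQ.lift_fst _ _ _
  have hw₂ : w ≫ q₂ = f := hQ.lift_snd _ _ _
  have h₂ :=
    Γ.isPullback_comp_comparison hpres hEf hsplit hp.1 h₁ (hsplitBy p₁ p₂ h₁) hQ hw₁ hw₂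
  have := isIso_of_isPullback_comp hp hEf hEq₂ hw₂ h₁ h₂
  exact Γ.trivCov_of_isIso_comparison hEf hQ hw₁ hw₂

end GaloisPaper
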